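/- Let $\eta_{p,q}$ and $\eta_{p,q}^* $ be defined via $\eta_{p,q} = \widehat{\wp}_{p,q}(1) + \widehat{\wp}_{p,q}^*(2)$ where $\widehat{\wp}_{p,q}(k)$, $k\in\{1,2\}$, are symmetrized creation operators with covariances $b_{p,q}(1)=b_{p,q}(2)=b_{p,q}$. Then for $p\neq q$: $\Psi_q(\eta_{p,q}\eta_{p,q}^*) = b_{p,q}$, $\Psi_q((\eta_{p,q}\eta_{p,q}^*)^2) = b_{p,q}^2 + b_{p,q}b_{q,p}$, and $\Psi_q((\eta_{p,q}\eta_{p,q}^*)^3) = b_{p,q}^3 + 3 b_{p,q}^2 b_{q,p} + b_{p,q} b_{q,p}^2$. -/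

import Mathlib

/-!
Starting from the vacuum `e (q, [])`, the operators `η*` and `η` only reach the basis vectors
indexed by the words `((q,0)(p,1))ⁿ` and `(p,1)((q,0)(p,1))ⁿ`. With `x = √b_{p,q}` and
`y = √b_{q,p}`, the operator `η η*` acts on the orthonormal sequence `e (q, ((q,0)(p,1))ⁿ)` as a
Jacobi matrix with diagonal `x², x² + y², x² + y², …` and off-diagonal entries `x y`; the first
three vacuum moments of a Jacobi matrix with diagonal `a, d, d, …` and off-diagonal `c` are
`a`, `a² + c²` and `a³ + 2ac² + dc²`.
-/

open ContinuousLinearMap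

/-- Basis-index test for nontrivial action of `℘_{p,q}(k)` on the matricially free Fock
space of tracial type; basis vectors are indexed by `Fin r × List (Fin r × Fin 2)`,
where the second entry of a letter is the label `k ∈ {1,2}` of the array. -/
def actsOn {r : ℕ} (q : Fin r) (x : Fin r × List (Fin r × Fin 2)) : Bool :=
  match x.2 with
  | [] => x.1 == q
  | (a, _) :: _ => a == q

@[simp]
theorem actsOn_nil {r : ℕ} (j x : Fin r) : actsOn j (x, []) = (x == j) := rfl

@[simp]
theorem actsOn_cons {r : ℕ} (j x a : Fin r) (k : Fin 2) (t : List (Fin r × Fin 2)) :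
    actsOn j (x, (a, k) :: t) = (a == j) := rfl

def zigzagWord {r : ℕ} (p q : Fin r) : ℕ → List (Fin r × Fin 2)
  | 0 => []
  | n + 1 => (q, 0) :: (p, 1) :: zigzagWord p q n

theorem length_zigzagWord {r : ℕ} (p q : Fin r) (n : ℕ) :
    (zigzagWord p q n).length = 2 * n := by
  induction n with
  | zero => rfl
  | succ n ih => simp [zigzagWord, ih]; ring

theorem zigzagWord_injective {r : ℕ} (p q : Fin r) :
    Function.Injective fun n => (q, zigzagWord p q n) := fun m n h => by
  have hlength := congrArg (fun x => x.2.length) h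
  simp only [length_zigzagWord] at hlength
  omega

theorem actsOn_zigzagWord {r : ℕ} (p q j : Fin r) (n : ℕ) :
    actsOn j (q, zigzagWord p q n) = (q == j) := by
  cases n <;> rfl

theorem inner_pow_apply_of_tridiagonal {E : Type*} [NormedAddCommGroup E]
    [InnerProductSpace ℂ E] (M : E →L[ℂ] E) {v : ℕ → E} (hv : Orthonormal ℂ v) {a c d : ℂ}
    (h0 : M (v 0) = a • v 0 + c • v 1)
    (hs : ∀ n, M (v (n + 1)) = c • v n + d • v (n + 1) + c • v (n + 2)) :
    inner ℂ (v 0) (M (v 0)) = a ∧ inner ℂ (v 0) ((M ^ 2) (v 0)) = a ^ 2 + c ^ 2 ∧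
      inner ℂ (v 0) ((M ^ 3) (v 0)) = a ^ 3 + 2 * a * c ^ 2 + d * c ^ 2 := by
  have hv' := orthonormal_iff_ite.mp hv
  refine ⟨?_, ?_, ?_⟩ <;> simp [pow_succ, h0, hs, hv', hv.1]
  ring

theorem HilbertBasis.adjoint_apply_eq_of_inner {ι 𝕜 E : Type*} [RCLike 𝕜]
    [NormedAddCommGroup E] [InnerProductSpace 𝕜 E] [CompleteSpace E] (b : HilbertBasis ι 𝕜 E)
    (T : E →L[𝕜] E) {y w : E} (h : ∀ i, inner 𝕜 (T (b i)) y = inner 𝕜 (b i) w) :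
    adjoint T y = w := by
  apply b.repr.injective
  ext i
  simp [HilbertBasis.repr_apply_apply, adjoint_inner_right, h]

noncomputable def etaBlock {H : Type} [NormedAddCommGroup H] [InnerProductSpace ℂ H]
    [CompleteSpace H] {r : ℕ} (c : Fin r → Fin r → Fin 2 → H →L[ℂ] H) (p q : Fin r) :
    H →L[ℂ] H :=
  (c p q 0 + c q p 0) + adjoint (c p q 1 + c q p 1)

section FockSpace

variable {H : Type} [NormedAddCommGroup H] [InnerProductSpace ℂ H] [CompleteSpace H] {r : ℕ}
  {b : Fin r → Fin r → ℝ} {e : HilbertBasis (Fin r × List (Fin r × Fin 2)) ℂ H}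
  {c : Fin r → Fin r → Fin 2 → H →L[ℂ] H}
  (hc : ∀ i j k x, c i j k (e x) =
    if actsOn j x then (Real.sqrt (b i j) : ℂ) • e (x.1, (i, k) :: x.2) else 0)
include hc

theorem adjoint_creation_apply_nil (i j : Fin r) (k : Fin 2) (x : Fin r) :
    adjoint (c i j k) (e (x, [])) = 0 := by
  refine e.adjoint_apply_eq_of_inner _ fun y => ?_
  have he := orthonormal_iff_ite.mp e.orthonormal
  rw [hc]
  split_ifs
  · rw [inner_smul_left, he]
    simp
  · simp

theorem adjoint_creation_apply_cons (i j : Fin r) (k : Fin 2) (x a : Fin r) (m : Fin 2)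
    (t : List (Fin r × Fin 2)) :
    adjoint (c i j k) (e (x, (a, m) :: t)) =
      if a = i ∧ m = k ∧ actsOn j (x, t) then (Real.sqrt (b i j) : ℂ) • e (x, t) else 0 := by
  refine e.adjoint_apply_eq_of_inner _ fun y => ?_
  have he := orthonormal_iff_ite.mp e.orthonormal
  rw [hc]
  split_ifs <;> simp only [inner_smul_left, inner_smul_right, he, inner_zero_left,
    inner_zero_right] <;> aesop

variable {p q : Fin r} (hpq : p ≠ q)
include hpq

theorem adjoint_etaBlock_apply_zigzagWord_zero :
    adjoint (etaBlock c p q) (e (q, zigzagWord p q 0)) =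
      (Real.sqrt (b p q) : ℂ) • e (q, (p, 1) :: zigzagWord p q 0) := by
  simp [etaBlock, zigzagWord, adjoint_creation_apply_nil hc, hc, hpq.symm]

theorem adjoint_etaBlock_apply_zigzagWord_succ (n : ℕ) :
    adjoint (etaBlock c p q) (e (q, zigzagWord p q (n + 1))) =
      (Real.sqrt (b q p) : ℂ) • e (q, (p, 1) :: zigzagWord p q n) +
      (Real.sqrt (b p q) : ℂ) • e (q, (p, 1) :: zigzagWord p q (n + 1)) := by
  simp [etaBlock, zigzagWord, adjoint_creation_apply_cons hc, hc, hpq, hpq.symm]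

theorem etaBlock_apply_cons_zigzagWord (n : ℕ) :
    etaBlock c p q (e (q, (p, 1) :: zigzagWord p q n)) =
      (Real.sqrt (b q p) : ℂ) • e (q, zigzagWord p q (n + 1)) +
      (Real.sqrt (b p q) : ℂ) • e (q, zigzagWord p q n) := by
  simp [etaBlock, zigzagWord, adjoint_creation_apply_cons hc, hc, actsOn_zigzagWord, hpq]

theorem etaBlock_mul_adjoint_apply_zigzagWord_zero :
    (etaBlock c p q * adjoint (etaBlock c p q)) (e (q, zigzagWord p q 0)) =
      (Real.sqrt (b p q) : ℂ) ^ 2 • e (q, zigzagWord p q 0) +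
      ((Real.sqrt (b p q) : ℂ) * Real.sqrt (b q p)) • e (q, zigzagWord p q 1) := by
  rw [mul_apply_eq_comp, adjoint_etaBlock_apply_zigzagWord_zero hc hpq, map_smul,
    etaBlock_apply_cons_zigzagWord hc hpq]
  module

theorem etaBlock_mul_adjoint_apply_zigzagWord_succ (n : ℕ) :
    (etaBlock c p q * adjoint (etaBlock c p q)) (e (q, zigzagWord p q (n + 1))) =
      ((Real.sqrt (b p q) : ℂ) * Real.sqrt (b q p)) • e (q, zigzagWord p q n) +
      ((Real.sqrt (b p q) : ℂ) ^ 2 + (Real.sqrt (b q p) : ℂ) ^ 2) •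
        e (q, zigzagWord p q (n + 1)) +
      ((Real.sqrt (b p q) : ℂ) * Real.sqrt (b q p)) • e (q, zigzagWord p q (n + 2)) := by
  rw [mul_apply_eq_comp, adjoint_etaBlock_apply_zigzagWord_succ hc hpq, map_add, map_smul,
    map_smul, etaBlock_apply_cons_zigzagWord hc hpq, etaBlock_apply_cons_zigzagWord hc hpq]
  module

end FockSpace

/-- Let `η_{p,q} = ℘̂_{p,q}(1) + ℘̂_{p,q}(2)*`, where
`℘̂_{p,q}(k) = ℘_{p,q}(k) + ℘_{q,p}(k)` are symmetrized creation operators with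
covariances `b_{p,q}(1) = b_{p,q}(2) = b_{p,q}`.  Then for `p ≠ q`:
`Ψ_q(η_{p,q} η_{p,q}*) = b_{p,q}`,
`Ψ_q((η_{p,q} η_{p,q}*)²) = b_{p,q}² + b_{p,q} b_{q,p}` and
`Ψ_q((η_{p,q} η_{p,q}*)³) = b_{p,q}³ + 3 b_{p,q}² b_{q,p} + b_{p,q} b_{q,p}²`. -/
theorem stmt19 {H : Type} [NormedAddCommGroup H] [InnerProductSpace ℂ H] [CompleteSpace H]
    (r : ℕ) (b : Fin r → Fin r → ℝ) (hb : ∀ i j, 0 ≤ b i j)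
    (e : Fin r × List (Fin r × Fin 2) → H) (he : Orthonormal ℂ e)
    (hdense : (Submodule.span ℂ (Set.range e)).topologicalClosure = ⊤)
    (c : Fin r → Fin r → Fin 2 → H →L[ℂ] H)
    (hc : ∀ i j k x, c i j k (e x) =
      if actsOn j x then (Real.sqrt (b i j) : ℂ) • e (x.1, (i, k) :: x.2) else 0)
    (whp : Fin r → Fin r → Fin 2 → H →L[ℂ] H)
    (hwhp : ∀ i j k, whp i j k = c i j k + c j i k)
    (p q : Fin r) (hpq : p ≠ q)
    (eta : H →L[ℂ] H) (heta : eta = whp p q 0 + adjoint (whp p q 1)) :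
    (@inner ℂ H _ (e (q, ([] : List (Fin r × Fin 2))))
        ((eta * adjoint eta) (e (q, [])))) = ((b p q : ℝ) : ℂ) ∧
    (@inner ℂ H _ (e (q, ([] : List (Fin r × Fin 2))))
        (((eta * adjoint eta) ^ 2) (e (q, [])))) =
      (((b p q) ^ 2 + b p q * b q p : ℝ) : ℂ) ∧
    (@inner ℂ H _ (e (q, ([] : List (Fin r × Fin 2))))
        (((eta * adjoint eta) ^ 3) (e (q, [])))) =
      (((b p q) ^ 3 + 3 * (b p q) ^ 2 * (b q p) + (b p q) * (b q p) ^ 2 : ℝ) : ℂ) := by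
  obtain ⟨E, rfl⟩ : ∃ E : HilbertBasis _ ℂ H, ⇑E = e :=
    ⟨HilbertBasis.mk he hdense.ge, HilbertBasis.coe_mk he _⟩
  have hη : eta = etaBlock c p q := by rw [heta, hwhp, hwhp]; rfl
  subst hη
  obtain ⟨h1, h2, h3⟩ := inner_pow_apply_of_tridiagonal _
    (E.orthonormal.comp _ (zigzagWord_injective p q))
    (etaBlock_mul_adjoint_apply_zigzagWord_zero hc hpq)
    (etaBlock_mul_adjoint_apply_zigzagWord_succ hc hpq)
  have hx : (Real.sqrt (b p q) : ℂ) ^ 2 = b p q := by exact_mod_cast Real.sq_sqrt (hb p q)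
  have hy : (Real.sqrt (b q p) : ℂ) ^ 2 = b q p := by exact_mod_cast Real.sq_sqrt (hb q p)
  refine ⟨h1.trans hx, h2.trans ?_, h3.trans ?_⟩ <;> simp only [mul_pow, hx, hy] <;>
    push_cast <;> ring
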